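/- arXiv:1802.10481 — 3 statements merged into one kernel-verified Lean document; each statement's English description precedes it below -/
import Mathlib

section
/- For integers H ≥ r ≥ 1 and 1 ≤ t, the number of t-subsets W of the K₀ = C(H,r) users (each user identified with a distinct r-subset of [H]) such that some relay h ∈ [H] is connected to all users in W (i.e., h belongs to every r-subset in W) equals Σ_{n=1}^{r} C(H,n)·C(K_n, t)·(-1)^{n-1}, where K_n = C(H-n, r-n). -/
/-!
A `t`-set of users has a common relay iff it consists of users through some relay `h`, so `Zset`
is the union over `h ∈ [H]` of the `t`-subsets of the users through `h`. By inclusion–exclusion,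
a nonempty set `S` of relays contributes `± C(N, t)`, where `N = C(H - |S|, r - |S|)` counts the
users through all of `S` (none if `|S| > r`); grouping the sets `S` by size gives the formula.
-/

/-- The set of `t`-subsets of the users (users = `r`-subsets of `[H]`, i.e. `Finset.range H`)
all of whose members share at least one common relay `h ∈ [H]`. -/
def Zset (H r t : ℕ) : Finset (Finset (Finset ℕ)) :=
  (((Finset.range H).powersetCard r).powersetCard t).filter
    (fun W => ∃ h ∈ Finset.range H, ∀ u ∈ W, h ∈ u)

open Finset

namespace Finset

variable {α : Type*} [DecidableEq α]

theorem card_filter_superset_powersetCard {S s : Finset α} (hS : S ⊆ s) (r : ℕ) :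
    #{u ∈ s.powersetCard r | S ⊆ u} = if #S ≤ r then (#s - #S).choose (r - #S) else 0 := by
  split_ifs with hr
  · rw [← card_sdiff_of_subset hS, ← card_powersetCard]
    refine card_nbij' (· \ S) (· ∪ S) ?_ ?_ ?_ ?_
    · intro u hu
      simp only [coe_filter, Set.mem_ofPred_eq, mem_powersetCard, mem_coe] at hu ⊢
      exact ⟨sdiff_subset_sdiff hu.1.1 le_rfl, by rw [card_sdiff_of_subset hu.2, hu.1.2]⟩
    · intro v hv
      simp only [coe_filter, Set.mem_ofPred_eq, mem_powersetCard, mem_coe] at hv ⊢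
      have hd : Disjoint v S := disjoint_of_subset_left hv.1 sdiff_disjoint
      refine ⟨⟨union_subset (hv.1.trans sdiff_subset) hS, ?_⟩, subset_union_right⟩
      rw [card_union_of_disjoint hd, hv.2, Nat.sub_add_cancel hr]
    · intro u hu
      exact sdiff_union_of_subset (mem_filter.1 hu).2
    · intro v hv
      exact union_sdiff_cancel_right
        (disjoint_of_subset_left (mem_powersetCard.1 hv).1 sdiff_disjoint)
  · refine card_eq_zero.2 (filter_false_of_mem fun u hu hSu => hr ?_)
    exact (mem_powersetCard.1 hu).2 ▸ card_le_card hSu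

theorem filter_powersetCard_exists_forall_mem_eq_biUnion (U : Finset (Finset α)) (I : Finset α)
    (t : ℕ) :
    {W ∈ U.powersetCard t | ∃ h ∈ I, ∀ u ∈ W, h ∈ u} =
      I.biUnion fun h => {u ∈ U | h ∈ u}.powersetCard t := by
  ext W
  simp only [mem_filter, mem_biUnion, mem_powersetCard, subset_iff]
  constructor
  · rintro ⟨⟨hWU, hW⟩, h, hI, hmem⟩
    exact ⟨h, hI, fun u hu => ⟨hWU hu, hmem u hu⟩, hW⟩
  · rintro ⟨h, hI, hWU, hW⟩
    exact ⟨⟨fun u hu => (hWU hu).1, hW⟩, h, hI, fun u hu => (hWU hu).2⟩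

theorem inf'_powersetCard_filter_mem (U : Finset (Finset α)) {S : Finset α} (hS : S.Nonempty)
    (t : ℕ) :
    S.inf' hS (fun h => {u ∈ U | h ∈ u}.powersetCard t) = {u ∈ U | S ⊆ u}.powersetCard t := by
  ext W
  simp only [mem_inf', mem_powersetCard, mem_filter, subset_iff]
  obtain ⟨i, hi⟩ := hS
  exact ⟨fun h => ⟨fun u hu => ⟨((h i hi).1 hu).1, fun j hj => ((h j hj).1 hu).2⟩, (h i hi).2⟩,
    fun h j hj => ⟨fun u hu => ⟨(h.1 hu).1, (h.1 hu).2 hj⟩, h.2⟩⟩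

theorem sum_nonempty_powerset_apply_card {β M : Type*} [AddCommMonoid M] (f : ℕ → M)
    (x : Finset β) :
    ∑ s ∈ x.powerset with s.Nonempty, f #s = ∑ n ∈ Icc 1 #x, (#x).choose n • f n := by
  simp_rw [sum_filter, ← card_pos]
  rw [sum_powerset_apply_card (fun n => if 0 < n then f n else 0)]
  simp_rw [smul_ite, smul_zero]
  rw [← sum_filter]
  congr 1
  ext n
  simp only [mem_filter, mem_range, mem_Icc]
  omega

end Finset

theorem card_Zset_eq_sum (H r t : ℕ) :
    (#(Zset H r t) : ℤ) = ∑ n ∈ Icc 1 H, H.choose n • ((-1) ^ (n + 1) *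
      ((if n ≤ r then (H - n).choose (r - n) else 0).choose t : ℤ)) := by
  classical
  set c : ℕ → ℤ := fun n => (-1) ^ (n + 1) *
    ((if n ≤ r then (H - n).choose (r - n) else 0).choose t : ℤ)
  rw [Zset, filter_powersetCard_exists_forall_mem_eq_biUnion, inclusion_exclusion_card_biUnion]
  calc _ = ∑ S : {S ∈ (range H).powerset | S.Nonempty}, c #S.1 := by
        refine sum_congr rfl fun S _ => ?_
        rw [inf'_powersetCard_filter_mem, card_powersetCard,
          card_filter_superset_powersetCard (mem_powerset.1 (mem_filter.1 S.2).1), card_range]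
    _ = ∑ S ∈ (range H).powerset with S.Nonempty, c #S := sum_coe_sort _ (fun S => c #S)
    _ = _ := by rw [sum_nonempty_powerset_apply_card, card_range]

theorem stmt0_general (H r t : ℕ) (hH : r ≤ H) (ht : 1 ≤ t) :
    ((Zset H r t).card : ℤ) =
      ∑ n ∈ Finset.Icc 1 r,
        (H.choose n : ℤ) * (((H - n).choose (r - n)).choose t : ℤ) * (-1) ^ (n - 1) := by
  rw [card_Zset_eq_sum]
  refine (sum_subset (Icc_subset_Icc_right hH) fun n hnH hnr => ?_).symm.trans
    (sum_congr rfl fun n hn => ?_)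
  · have hrn : r < n := by simp only [mem_Icc] at hnH hnr; omega
    simp [if_neg hrn.not_ge, Nat.choose_eq_zero_of_lt ht]
  · obtain ⟨hn1, hnr⟩ := mem_Icc.1 hn
    rw [if_pos hnr, nsmul_eq_mul, show n + 1 = n - 1 + 2 by omega, pow_add]
    ring

theorem stmt0 (H r t : ℕ) (hr : 1 ≤ r) (hH : r ≤ H) (ht : 1 ≤ t) :
    ((Zset H r t).card : ℤ) =
      ∑ n ∈ Finset.Icc 1 r,
        (H.choose n : ℤ) * (((H - n).choose (r - n)).choose t : ℤ) * (-1) ^ (n - 1) :=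
  stmt0_general H r t hH ht
end

section
/- For integers H ≥ r ≥ 1 and g with 1 ≤ g ≤ K₁ = C(H−1,r−1), the inclusion-exclusion sum |Z_g| = Σ_{n=1}^{r} C(H,n)·C(K_n, g)·(−1)^{n−1} is nonnegative, and is strictly positive for 1 ≤ g ≤ K₁. -/
/-!
The sum is the inclusion–exclusion expansion of the number of `g`-element families of
`r`-subsets of an `H`-set whose members share a common point. Such a family is a `g`-subset of
the star of some point `i` (the `r`-subsets containing `i`), and the stars of the points of a
nonempty set `t` meet in the `r`-subsets containing `t`, of which there are
`C(H - |t|, r - |t|)`. Being a cardinality, the sum is nonnegative; it is positive because a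
single star already has `C(H - 1, r - 1) ≥ g` elements.
-/

open Finset

theorem Finset.sum_powerset_filter_nonempty_apply_card {β M : Type*} [AddCommMonoid M]
    (f : ℕ → M) (s : Finset β) :
    ∑ t ∈ s.powerset with t.Nonempty, f #t = ∑ n ∈ Icc 1 #s, (#s).choose n • f n := by
  have hvanish : ∀ n ∈ range (#s + 1), n ∉ Icc 1 #s →
      (#s).choose n • (if n = 0 then 0 else f n) = 0 := by
    intro n hn hn'
    simp only [mem_range, mem_Icc] at hn hn'
    simp [show n = 0 by omega]
  have hite : ∀ t ∈ s.powerset,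
      (if t.Nonempty then f #t else 0) = if #t = 0 then 0 else f #t := fun t _ => by
    simp only [card_eq_zero, ← not_nonempty_iff_eq_empty, ite_not]
  rw [sum_filter, sum_congr rfl hite, sum_powerset_apply_card (fun n => if n = 0 then 0 else f n),
    ← sum_subset (fun n hn => by simp only [mem_Icc, mem_range] at hn ⊢; omega) hvanish]
  refine sum_congr rfl fun n hn => ?_
  rw [if_neg (by simp only [mem_Icc] at hn; omega)]

section

variable {α : Type*} [Fintype α] [DecidableEq α]

/-- Counting complements (the `(card α - r)`-subsets of `tᶜ`) gives a formula that stays correct,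
namely zero, when `r < #t`. -/
theorem Finset.card_filter_superset_powersetCard_s12 {r : ℕ} (t : Finset α)
    (hr : r ≤ Fintype.card α) :
    #{A ∈ powersetCard r univ | t ⊆ A} =
      (Fintype.card α - #t).choose (Fintype.card α - r) := by
  rw [← card_compl, ← card_powersetCard]
  refine card_nbij' compl compl (fun A hA => ?_) (fun B hB => ?_)
    (fun A _ => compl_compl A) (fun B _ => compl_compl B)
  · simp only [coe_filter, mem_powersetCard, Set.mem_ofPred_eq, mem_coe] at hA ⊢
    exact ⟨compl_subset_compl.2 hA.2, by rw [card_compl, hA.1.2]⟩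
  · simp only [coe_filter, mem_powersetCard, Set.mem_ofPred_eq, mem_coe] at hB ⊢
    exact ⟨⟨subset_univ _, by rw [card_compl, hB.2]; omega⟩, subset_compl_comm.1 hB.1⟩

theorem Finset.inf'_powersetCard_filter_mem_s12 (S : Finset (Finset α)) (g : ℕ) {t : Finset α}
    (ht : t.Nonempty) :
    t.inf' ht (fun i => {A ∈ S | i ∈ A}.powersetCard g) = {A ∈ S | t ⊆ A}.powersetCard g := by
  ext T
  simp only [mem_inf', mem_powersetCard, subset_iff, mem_filter]
  obtain ⟨i₀, hi₀⟩ := ht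
  exact ⟨fun h => ⟨fun A hA => ⟨((h i₀ hi₀).1 hA).1, fun i hi => ((h i hi).1 hA).2⟩, (h i₀ hi₀).2⟩,
    fun h i hi => ⟨fun A hA => ⟨(h.1 hA).1, (h.1 hA).2 hi⟩, h.2⟩⟩

variable (α) in
/-- The paper's `Z_g`: points of `α` are relays, users are `r`-subsets of `α`. -/
def commonPointFamilies (r g : ℕ) : Finset (Finset (Finset α)) :=
  (univ : Finset α).biUnion fun i => {A ∈ powersetCard r (univ : Finset α) | i ∈ A}.powersetCard g

theorem card_commonPointFamilies_eq_inclusion_exclusion {r : ℕ} (g : ℕ)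
    (hr : r ≤ Fintype.card α) :
    (#(commonPointFamilies α r g) : ℤ) =
      ∑ n ∈ Icc 1 (Fintype.card α), ((Fintype.card α).choose n : ℤ) *
        (((Fintype.card α - n).choose (Fintype.card α - r)).choose g : ℤ) * (-1) ^ (n + 1) := by
  rw [commonPointFamilies, inclusion_exclusion_card_biUnion]
  set f : ℕ → ℤ := fun n =>
    (-1) ^ (n + 1) * (((Fintype.card α - n).choose (Fintype.card α - r)).choose g : ℤ)
  have hterm : ∀ t : {t ∈ (univ : Finset α).powerset | t.Nonempty},
      (-1 : ℤ) ^ (#t.1 + 1) * #(t.1.inf' (mem_filter.1 t.2).2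
        fun i => {A ∈ powersetCard r (univ : Finset α) | i ∈ A}.powersetCard g) =
      f #t.1 := fun t => by
    rw [inf'_powersetCard_filter_mem_s12, card_powersetCard, card_filter_superset_powersetCard_s12 _ hr]
  rw [sum_congr rfl fun t _ => hterm t, sum_coe_sort _ fun t => f #t,
    sum_powerset_filter_nonempty_apply_card f, card_univ]
  refine sum_congr rfl fun n _ => ?_
  rw [nsmul_eq_mul]
  ring

theorem card_commonPointFamilies {r g : ℕ} (hg : 1 ≤ g) (hr : r ≤ Fintype.card α) :
    (#(commonPointFamilies α r g) : ℤ) =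
      ∑ n ∈ Icc 1 r, ((Fintype.card α).choose n : ℤ) *
        (((Fintype.card α - n).choose (r - n)).choose g : ℤ) * (-1) ^ (n - 1) := by
  set N := Fintype.card α
  have hvanish : ∀ n ∈ Icc 1 N, n ∉ Icc 1 r →
      (N.choose n : ℤ) * (((N - n).choose (N - r)).choose g : ℤ) * (-1) ^ (n + 1) = 0 := by
    intro n hn hnr
    simp only [mem_Icc] at hn hnr
    rw [Nat.choose_eq_zero_of_lt (by omega : N - n < N - r), Nat.choose_eq_zero_of_lt hg]
    simp
  rw [card_commonPointFamilies_eq_inclusion_exclusion g hr,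
    ← sum_subset (Icc_subset_Icc_right hr) hvanish]
  refine sum_congr rfl fun n hn => ?_
  simp only [mem_Icc] at hn
  rw [Nat.choose_symm_of_eq_add (by omega : N - n = (N - r) + (r - n)),
    show n + 1 = n - 1 + 2 by omega, pow_add, neg_one_sq, mul_one]

theorem commonPointFamilies_nonempty {r g : ℕ} (i : α) (hr₀ : 1 ≤ r) (hr : r ≤ Fintype.card α)
    (hg : g ≤ (Fintype.card α - 1).choose (r - 1)) :
    (commonPointFamilies α r g).Nonempty := by
  have hcard : #{A ∈ powersetCard r (univ : Finset α) | i ∈ A} =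
      (Fintype.card α - 1).choose (r - 1) := by
    simpa only [singleton_subset_iff, card_singleton,
      ← Nat.choose_symm_of_eq_add (by omega : Fintype.card α - 1 = (Fintype.card α - r) + (r - 1))]
      using card_filter_superset_powersetCard_s12 {i} hr
  obtain ⟨T, hT, hTcard⟩ := exists_subset_card_eq (hcard ▸ hg)
  exact ⟨T, mem_biUnion.2 ⟨i, mem_univ i, mem_powersetCard.2 ⟨hT, hTcard⟩⟩⟩

end

theorem stmt12 (H r g : ℕ) (hr : 1 ≤ r) (hH : r ≤ H)
    (hg1 : 1 ≤ g) (hg2 : g ≤ (H - 1).choose (r - 1)) :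
    0 ≤ (∑ n ∈ Finset.Icc 1 r,
        (H.choose n : ℤ) * (((H - n).choose (r - n)).choose g : ℤ) * (-1) ^ (n - 1)) ∧
    0 < (∑ n ∈ Finset.Icc 1 r,
        (H.choose n : ℤ) * (((H - n).choose (r - n)).choose g : ℤ) * (-1) ^ (n - 1)) := by
  have hH₀ : 0 < H := by omega
  rw [← Fintype.card_fin H] at hH hg2 ⊢
  rw [← card_commonPointFamilies hg1 hH]
  have hpos : 0 < #(commonPointFamilies (Fin H) r g) :=
    card_pos.2 (commonPointFamilies_nonempty ⟨0, hH₀⟩ hr hH hg2)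
  omega
end

section
/- For integers H ≥ r ≥ 1 and 0 ≤ t ≤ C(H,r), the two expressions for |Z₂| agree: Σ_{n=1}^{r} C(H,n)·C(C(H−n,r−n), 2)·(−1)^{n−1} = (1/2)·C(H,r)·(C(H,r) − 1 − C(H−r, r)). -/
/-!
Put `a n = C(H - n, r - n)` and `C(a, 2) = (a² - a) / 2`. Since `C(H, n) a n = C(H, r) C(r, n)`,
the alternating sum of `C(H, n) a n` is `C(H, r) (1 - 1)^r = 0`, while that of `C(H, n) (a n)²` is
`C(H, r) ∑ (-1)^n C(r, n) C(H - n, r - n) = C(H, r) C(H - r, r)`, the inclusion–exclusion count of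
the `r`-sets avoiding a fixed `r`-set. The `n = 0` term `C(C(H, r), 2)` supplies the rest.
-/

open Finset Polynomial

section
variable {R : Type*} [CommRing R]

theorem alternating_sum_choose_mul_choose_sub_sub {r M : ℕ} (hrM : r ≤ M) (k : ℕ) :
    ∑ n ∈ range (k + 1), (-1 : R) ^ n * r.choose n * (M - n).choose (k - n) =
      (M - r).choose k := by
  have hpoly : ∑ n ∈ range (r + 1),
      C ((-1 : R) ^ n * r.choose n) * (X ^ n * (1 + X) ^ (M - n)) = (1 + X) ^ (M - r) := by
    calc _ = ((-X + (1 + X)) ^ r * (1 + X) ^ (M - r) : R[X]) := by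
          rw [add_pow, sum_mul]
          refine sum_congr rfl fun n hn => ?_
          have hn : n ≤ r := mem_range_succ_iff.mp hn
          rw [show M - n = (r - n) + (M - r) by omega, pow_add, neg_pow]
          simp only [map_mul, map_pow, map_neg, map_one, map_natCast]
          ring
      _ = (1 + X) ^ (M - r) := by simp
  -- The guard is needed because `k - n` truncates to `0` for `n > k`.
  set f : ℕ → R := fun n =>
    (-1 : R) ^ n * r.choose n * if n ≤ k then ((M - n).choose (k - n) : R) else 0
  have hf : ∑ n ∈ range (r + 1), f n = (M - r).choose k := by
    rw [← coeff_one_add_X_pow R, ← hpoly, finsetSum_coeff]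
    simp only [coeff_C_mul, coeff_X_pow_mul', coeff_one_add_X_pow, f, mul_ite, mul_zero]
  calc _ = ∑ n ∈ range (k + 1), f n := sum_congr rfl fun n hn => by
          simp [f, mem_range_succ_iff.mp hn]
    _ = ∑ n ∈ range (r + k + 1), f n := sum_subset (by simp) fun n _ hn => by simp_all [f]
    _ = ∑ n ∈ range (r + 1), f n := (sum_subset (by simp) fun n _ hn => by
          simp_all [f, Nat.choose_eq_zero_of_lt]).symm
    _ = _ := hf

variable {H r : ℕ}

theorem alternating_sum_choose_mul_choose_sub_eq_zero (hr : r ≠ 0) :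
    ∑ n ∈ range (r + 1), (-1 : R) ^ n * H.choose n * (H - n).choose (r - n) = 0 := by
  have h := congrArg (Int.cast : ℤ → R) (Int.alternating_sum_range_choose_of_ne hr)
  push_cast at h
  rw [← mul_zero (H.choose r : R), ← h, mul_sum]
  refine sum_congr rfl fun n hn => ?_
  rw [mul_assoc, ← Nat.cast_mul, ← Nat.choose_mul (mem_range_succ_iff.mp hn)]
  push_cast
  ring

theorem alternating_sum_choose_mul_sq_choose_sub (hrH : r ≤ H) :
    ∑ n ∈ range (r + 1), (-1 : R) ^ n * H.choose n * ((H - n).choose (r - n) : R) ^ 2 =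
      H.choose r * (H - r).choose r := by
  rw [← alternating_sum_choose_mul_choose_sub_sub hrH r, mul_sum]
  refine sum_congr rfl fun n hn => ?_
  have h := congrArg (Nat.cast : ℕ → R) (Nat.choose_mul (n := H) (mem_range_succ_iff.mp hn))
  push_cast at h
  linear_combination -(-1 : R) ^ n * ((H - n).choose (r - n) : R) * h

end

theorem alternating_sum_choose_mul_choose_two_choose_sub {H r : ℕ} (hr : r ≠ 0) (hrH : r ≤ H) :
    ∑ n ∈ range (r + 1), (-1 : ℚ) ^ n * H.choose n * ((H - n).choose (r - n)).choose 2 =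
      H.choose r * (H - r).choose r / 2 := by
  calc _ = (∑ n ∈ range (r + 1), (-1 : ℚ) ^ n * H.choose n * ((H - n).choose (r - n) : ℚ) ^ 2 -
        ∑ n ∈ range (r + 1), (-1 : ℚ) ^ n * H.choose n * (H - n).choose (r - n)) / 2 := by
        rw [← sum_sub_distrib, sum_div]
        exact sum_congr rfl fun n _ => by rw [Nat.cast_choose_two]; ring
    _ = _ := by
      rw [alternating_sum_choose_mul_sq_choose_sub hrH,
        alternating_sum_choose_mul_choose_sub_eq_zero hr, sub_zero]

theorem stmt17 (H r : ℕ) (hr : 1 ≤ r) (hH : r ≤ H) :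
    (∑ n ∈ Finset.Icc 1 r,
        (H.choose n : ℚ) * (((H - n).choose (r - n)).choose 2 : ℚ) * (-1) ^ (n - 1))
      = (1 / 2) * (H.choose r : ℚ) *
          ((H.choose r : ℚ) - 1 - ((H - r).choose r : ℚ)) := by
  have h := alternating_sum_choose_mul_choose_two_choose_sub (by omega : r ≠ 0) hH
  rw [sum_range_eq_add_Ico _ (by omega), Ico_add_one_right_eq_Icc] at h
  simp only [pow_zero, one_mul, Nat.choose_zero_right, Nat.sub_zero] at h
  rw [Nat.cast_choose_two] at h
  have hsign : ∀ n ∈ Icc 1 r,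
      (H.choose n : ℚ) * (((H - n).choose (r - n)).choose 2 : ℚ) * (-1) ^ (n - 1) =
        -((-1 : ℚ) ^ n * H.choose n * ((H - n).choose (r - n)).choose 2) := fun n hn => by
    obtain ⟨m, rfl⟩ := Nat.exists_eq_add_of_le' (mem_Icc.mp hn).1
    rw [Nat.add_sub_cancel, pow_succ]
    ring
  rw [sum_congr rfl hsign, sum_neg_distrib]
  linear_combination -h
end
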